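/- arXiv:2002.04948 — 4 statements merged into one kernel-verified Lean document; each statement's English description precedes it below -/
import Mathlib

section
/- Let 𝒟 be a nontrivial symmetric (v,k,λ) design, let G be a flag-transitive group of automorphisms of 𝒟, and let α be a point of 𝒟. Then k divides λ·d for every nontrivial subdegree d of G, i.e., for the cardinality d of every orbit of the stabilizer G_α on 𝒫 other than {α}. -/
/-- A symmetric `(v, k, λ)` design: a finite set of `v` points together with a family of
`v` blocks, each block a `k`-element subset of the points, such that every point lies in
exactly `k` blocks and any two distinct points lie in exactly `λ` common blocks. -/
structure SymmetricDesign (P : Type) [Fintype P] [DecidableEq P] (v k lam : ℕ) where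
  blocks : Finset (Finset P)
  card_points : Fintype.card P = v
  card_blocks : blocks.card = v
  block_size : ∀ b ∈ blocks, b.card = k
  point_count : ∀ p : P, (blocks.filter fun b => p ∈ b).card = k
  pair_count : ∀ p q : P, p ≠ q →
    (blocks.filter fun b => p ∈ b ∧ q ∈ b).card = lam

/-- `G` is a group of automorphisms of the design `D`: every element of `G` maps blocks
to blocks. -/
def IsAutGroup {P : Type} [Fintype P] [DecidableEq P] {v k lam : ℕ}
    (D : SymmetricDesign P v k lam) (G : Subgroup (Equiv.Perm P)) : Prop :=
  ∀ g ∈ G, ∀ b ∈ D.blocks, b.image (g : P → P) ∈ D.blocks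

/-- `G` is flag-transitive on `D`: it acts transitively on incident point-block pairs. -/
def FlagTransitive {P : Type} [Fintype P] [DecidableEq P] {v k lam : ℕ}
    (D : SymmetricDesign P v k lam) (G : Subgroup (Equiv.Perm P)) : Prop :=
  ∀ p₁ p₂ : P, ∀ b₁ b₂ : Finset P, b₁ ∈ D.blocks → b₂ ∈ D.blocks →
    p₁ ∈ b₁ → p₂ ∈ b₂ → ∃ g ∈ G, g p₁ = p₂ ∧ b₁.image (g : P → P) = b₂

/-!
Fix `α` and a `G_α`-invariant set `Δ` of points not containing `α`. Counting the incident
pairs `(β, B)` with `β ∈ Δ` and `α ∈ B` in two ways gives `λ |Δ| = ∑_{B ∋ α} |B ∩ Δ|`.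
Flag-transitivity makes `G_α` transitive on the `k` blocks through `α`, so all the summands
are equal and `k` divides the sum. For `Δ` an orbit of `G_α` other than `{α}` this is the claim.
-/

open Finset MulAction

theorem Finset.card_dvd_sum_of_forall_eq {ι : Type*} {s : Finset ι} {f : ι → ℕ}
    (h : ∀ x ∈ s, ∀ y ∈ s, f x = f y) : #s ∣ ∑ x ∈ s, f x := by
  rcases s.eq_empty_or_nonempty with rfl | ⟨x₀, hx₀⟩
  · simp
  · rw [sum_const_nat fun x hx => h x hx x₀ hx₀]
    exact dvd_mul_right _ _

section Design

variable {P : Type} [Fintype P] [DecidableEq P] {v k lam : ℕ}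

theorem SymmetricDesign.sum_card_inter_eq_lam_mul_card (D : SymmetricDesign P v k lam)
    {α : P} {Δ : Finset P} (hα : α ∉ Δ) :
    ∑ B ∈ D.blocks.filter (α ∈ ·), #(Δ ∩ B) = lam * #Δ := by
  refine (sum_card_inter fun β hβ => ?_).trans (mul_comm _ _)
  rw [filter_filter]
  exact D.pair_count α β (ne_of_mem_of_not_mem hβ hα).symm

theorem FlagTransitive.card_inter_eq {D : SymmetricDesign P v k lam}
    {G : Subgroup (Equiv.Perm P)} (hFlag : FlagTransitive D G) {α : P} {Δ : Finset P}
    (hΔ : ∀ g ∈ G, g α = α → Δ.image g = Δ) {B B' : Finset P}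
    (hB : B ∈ D.blocks) (hB' : B' ∈ D.blocks) (hαB : α ∈ B) (hαB' : α ∈ B') :
    #(Δ ∩ B) = #(Δ ∩ B') := by
  obtain ⟨g, hg, hgα, rfl⟩ := hFlag α α B B' hB hB' hαB hαB'
  calc #(Δ ∩ B) = #((Δ ∩ B).image g) := (card_image_of_injective _ g.injective).symm
    _ = #(Δ ∩ B.image g) := by rw [image_inter _ _ g.injective, hΔ g hg hgα]

end Design

section Stabilizer

variable {P : Type} {G : Subgroup (Equiv.Perm P)} {α : P}

theorem MulAction.image_orbit_stabilizer (p : P) {g : Equiv.Perm P} (hg : g ∈ G)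
    (hgα : g α = α) : g '' orbit (stabilizer G α) p = orbit (stabilizer G α) p :=
  smul_orbit (⟨⟨g, hg⟩, hgα⟩ : stabilizer G α) p

theorem MulAction.notMem_orbit_stabilizer {p : P}
    (hp : orbit (stabilizer G α) p ≠ {α}) : α ∉ orbit (stabilizer G α) p := by
  intro hα
  refine hp ((orbit_eq_iff.mpr hα).symm.trans ?_)
  exact Set.eq_singleton_iff_unique_mem.mpr ⟨mem_orbit_self α, fun _ ⟨h, hx⟩ => hx ▸ h.2⟩

end Stabilizer

theorem symmetricDesign_flagTransitive_subdegree_general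
    {P : Type} [Fintype P] [DecidableEq P] {v k lam : ℕ}
    (D : SymmetricDesign P v k lam)
    (G : Subgroup (Equiv.Perm P))
    (hFlag : FlagTransitive D G) (α : P) :
    ∀ p : P, MulAction.orbit (MulAction.stabilizer G α) p ≠ ({α} : Set P) →
      k ∣ lam * Nat.card (MulAction.orbit (MulAction.stabilizer G α) p) := by
  intro p hp
  have hfin := Set.toFinite (orbit (stabilizer G α) p)
  have hinv : ∀ g ∈ G, g α = α → hfin.toFinset.image g = hfin.toFinset := fun g hg hgα => by
    rw [← coe_inj, coe_image, Set.Finite.coe_toFinset, image_orbit_stabilizer p hg hgα]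
  have hα : α ∉ hfin.toFinset := by simpa using notMem_orbit_stabilizer hp
  rw [Nat.card_eq_card_finite_toFinset hfin, ← D.sum_card_inter_eq_lam_mul_card hα]
  have hconst := card_dvd_sum_of_forall_eq fun B hB B' hB' =>
    hFlag.card_inter_eq hinv (mem_filter.mp hB).1 (mem_filter.mp hB').1
      (mem_filter.mp hB).2 (mem_filter.mp hB').2
  rwa [D.point_count α] at hconst

/-- Lemma 2.1(c): for a nontrivial flag-transitive symmetric `(v,k,λ)` design,
`k` divides `λ·d` for every nontrivial subdegree `d` of `G`, i.e. for the cardinality of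
every orbit of the point stabiliser `G_α` on the point set other than `{α}`. -/
theorem symmetricDesign_flagTransitive_subdegree
    {P : Type} [Fintype P] [DecidableEq P] {v k lam : ℕ}
    (D : SymmetricDesign P v k lam) (hnt : 2 < k ∧ k < v - 1)
    (G : Subgroup (Equiv.Perm P)) (hAut : IsAutGroup D G)
    (hFlag : FlagTransitive D G) (α : P) :
    ∀ p : P, MulAction.orbit (MulAction.stabilizer G α) p ≠ ({α} : Set P) →
      k ∣ lam * Nat.card (MulAction.orbit (MulAction.stabilizer G α) p) :=
  symmetricDesign_flagTransitive_subdegree_general D G hFlag α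
end

section
/- Let 𝒟 be a nontrivial symmetric (v,k,λ) design admitting a flag-transitive group of automorphisms G, and let α be a point of 𝒟. Then λ·|G| < |G_α|³, and in particular |G| ≤ |G_α|³. Moreover, if G is a finite almost simple group with socle X and H = G_α is a maximal subgroup of G not containing X, then |X| < |Out(X)|²·|H ∩ X|³. -/
/-- The order of the outer automorphism group `Out(X) = Aut(X)/Inn(X)` of a group `X`. -/
noncomputable def outCard (X : Type*) [Group X] : ℕ :=
  Nat.card (MulAut X ⧸ (MulAut.conj : X →* MulAut X).range)

open Finset

namespace SymmetricDesign

variable {P : Type} [Fintype P] [DecidableEq P] {v k lam : ℕ}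

theorem lam_mul_sub_one_eq (D : SymmetricDesign P v k lam) (α : P) :
    lam * (v - 1) = k * (k - 1) := by
  set blocksThrough := D.blocks.filter (α ∈ ·)
  have hpoint : ∀ q ∈ univ.erase α, #(blocksThrough.bipartiteAbove (· ∈ ·) q) = lam := by
    intro q hq
    simpa [bipartiteAbove, blocksThrough, filter_filter, and_comm] using
      D.pair_count α q (Ne.symm (ne_of_mem_erase hq))
  have hblock :
      ∀ b ∈ blocksThrough, #((univ.erase α).bipartiteBelow (· ∈ ·) b) = k - 1 := by
    intro b hb
    obtain ⟨hbD, hαb⟩ := mem_filter.mp hb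
    have : (univ.erase α).bipartiteBelow (· ∈ ·) b = b.erase α := by
      ext q
      simp [bipartiteBelow, and_comm]
    rw [this, card_erase_of_mem hαb, D.block_size b hbD]
  calc lam * (v - 1) = ∑ q ∈ univ.erase α, #(blocksThrough.bipartiteAbove (· ∈ ·) q) := by
        rw [sum_congr rfl hpoint, sum_const, card_erase_of_mem (mem_univ α), card_univ,
          D.card_points, smul_eq_mul, mul_comm]
    _ = ∑ b ∈ blocksThrough, #((univ.erase α).bipartiteBelow (· ∈ ·) b) :=
        sum_card_bipartiteAbove_eq_sum_card_bipartiteBelow _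
    _ = k * (k - 1) := by
        rw [sum_congr rfl hblock, sum_const, D.point_count α, smul_eq_mul]

theorem lam_pos (D : SymmetricDesign P v k lam) (α : P) (hk : 2 ≤ k) : 0 < lam := by
  have h := D.lam_mul_sub_one_eq α
  have : 0 < k * (k - 1) := Nat.mul_pos (by omega) (by omega)
  exact Nat.pos_of_mul_pos_right (h ▸ this)

theorem lam_mul_lt_sq (D : SymmetricDesign P v k lam) (α : P) (hk : 0 < k) (hkv : k < v) :
    lam * v < k ^ 2 := by
  have h := D.lam_mul_sub_one_eq α
  obtain ⟨k, rfl⟩ := Nat.exists_eq_add_one_of_ne_zero hk.ne'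
  obtain ⟨v, rfl⟩ := Nat.exists_eq_add_one_of_ne_zero (by omega : v ≠ 0)
  simp only [Nat.add_sub_cancel] at h
  have hlam : lam < k + 1 := by nlinarith
  nlinarith

theorem exists_mem_block (D : SymmetricDesign P v k lam) (hk : 0 < k) (p : P) :
    ∃ b ∈ D.blocks, p ∈ b := by
  obtain ⟨b, hb⟩ : (D.blocks.filter (p ∈ ·)).Nonempty := by
    rw [← card_pos, D.point_count]
    exact hk
  exact ⟨b, (mem_filter.mp hb).1, (mem_filter.mp hb).2⟩

end SymmetricDesign

namespace FlagTransitive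

variable {P : Type} [Fintype P] [DecidableEq P] {v k lam : ℕ} {D : SymmetricDesign P v k lam}
  {G : Subgroup (Equiv.Perm P)}

theorem isPretransitive (hFlag : FlagTransitive D G) (hk : 0 < k) :
    MulAction.IsPretransitive G P := by
  refine ⟨fun p q => ?_⟩
  obtain ⟨b₁, hb₁, hpb₁⟩ := D.exists_mem_block hk p
  obtain ⟨b₂, hb₂, hqb₂⟩ := D.exists_mem_block hk q
  obtain ⟨g, hg, hgp, -⟩ := hFlag p q b₁ b₂ hb₁ hb₂ hpb₁ hqb₂
  exact ⟨⟨g, hg⟩, hgp⟩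

theorem card_eq_mul_card_stabilizer (hFlag : FlagTransitive D G) (hk : 0 < k) (α : P) :
    Nat.card G = v * Nat.card (MulAction.stabilizer G α) := by
  have := hFlag.isPretransitive hk
  rw [← (MulAction.stabilizer G α).index_mul_card,
    MulAction.index_stabilizer_of_transitive, Nat.card_eq_fintype_card, D.card_points]

theorem le_card_stabilizer (hAut : IsAutGroup D G) (hFlag : FlagTransitive D G) (hk : 0 < k)
    (α : P) : k ≤ Nat.card (MulAction.stabilizer G α) := by
  obtain ⟨b₀, hb₀, hαb₀⟩ := D.exists_mem_block hk α
  set blocksThrough := D.blocks.filter (α ∈ ·)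
  have hmaps : ∀ g : MulAction.stabilizer G α,
      b₀.image ((g : G) : Equiv.Perm P) ∈ blocksThrough := fun g =>
    mem_filter.mpr ⟨hAut _ (g : G).2 b₀ hb₀, mem_image.mpr ⟨α, hαb₀, g.2⟩⟩
  have hsurj : Function.Surjective fun g : MulAction.stabilizer G α =>
      (⟨_, hmaps g⟩ : blocksThrough) := by
    rintro ⟨b, hb⟩
    obtain ⟨hbD, hαb⟩ := mem_filter.mp hb
    obtain ⟨g, hg, hgα, hgb⟩ := hFlag α α b₀ b hb₀ hbD hαb₀ hαb
    exact ⟨⟨⟨g, hg⟩, hgα⟩, Subtype.ext hgb⟩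
  calc k = Nat.card blocksThrough := by
        rw [Nat.card_eq_fintype_card, Fintype.card_coe, D.point_count α]
    _ ≤ _ := Nat.card_le_card_of_surjective _ hsurj

theorem lam_mul_card_lt_card_stabilizer_pow_three (hAut : IsAutGroup D G)
    (hFlag : FlagTransitive D G) (hk : 0 < k) (hkv : k < v) (α : P) :
    lam * Nat.card G < Nat.card (MulAction.stabilizer G α) ^ 3 := by
  set h := Nat.card (MulAction.stabilizer G α)
  have hk_le : k ≤ h := hFlag.le_card_stabilizer hAut hk α
  calc lam * Nat.card G = lam * v * h := by
        rw [hFlag.card_eq_mul_card_stabilizer hk α, mul_assoc]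
    _ < k ^ 2 * h := Nat.mul_lt_mul_of_pos_right (D.lam_mul_lt_sq α hk hkv) Nat.card_pos
    _ ≤ h ^ 2 * h := Nat.mul_le_mul_right _ (Nat.pow_le_pow_left hk_le 2)
    _ = h ^ 3 := by ring

end FlagTransitive

theorem Subgroup.card_mul_card_eq_card_inf_mul_card {G : Type*} [Group G] (H K : Subgroup G)
    [K.Normal] (hHK : H ⊔ K = ⊤) :
    Nat.card H * Nat.card K = Nat.card (H ⊓ K : Subgroup G) * Nat.card G := by
  have hH : Nat.card H = Nat.card (H ⊓ K : Subgroup G) * K.index := by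
    rw [← ((H ⊓ K).subgroupOf H).card_mul_index,
      Nat.card_congr (Subgroup.subgroupOfEquivOfLe inf_le_left).toEquiv]
    change _ * (H ⊓ K).relIndex H = _
    rw [Subgroup.inf_relIndex_left, ← Subgroup.relIndex_sup_right, hHK,
      Subgroup.relIndex_top_right]
  rw [hH, mul_assoc, K.index_mul_card]

theorem MulAut.conjNormal_injective {G : Type*} [Group G] (X : Subgroup G) [X.Normal]
    (hX : Subgroup.centralizer (X : Set G) = ⊥) :
    Function.Injective (MulAut.conjNormal : G →* MulAut X) := by
  rw [← MonoidHom.ker_eq_bot_iff, eq_bot_iff, ← hX]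
  intro g hg x hx
  have hfix : g * x * g⁻¹ = x := by
    rw [← MulAut.conjNormal_apply (H := X) g ⟨x, hx⟩, MonoidHom.mem_ker.mp hg]
    rfl
  calc x * g = g * x * g⁻¹ * g := by rw [hfix]
    _ = g * x := by group

theorem card_mulAut_le_outCard_mul_card (X : Type*) [Group X] [Finite X] :
    Nat.card (MulAut X) ≤ outCard X * Nat.card X := by
  rw [outCard, Subgroup.card_eq_card_quotient_mul_card_subgroup MulAut.conj.range]
  exact Nat.mul_le_mul_left _
    (Nat.card_le_card_of_surjective _ (MulAut.conj : X →* MulAut X).rangeRestrict_surjective)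

theorem card_lt_outCard_sq_mul_card_inf_pow_three {G : Type*} [Group G] [Finite G]
    (H X : Subgroup G) [X.Normal] (hG : Nat.card G < Nat.card H ^ 3)
    (hX : Subgroup.centralizer (X : Set G) = ⊥) (hH : IsCoatom H) (hXH : ¬ X ≤ H) :
    Nat.card X < outCard X ^ 2 * Nat.card (H ⊓ X : Subgroup G) ^ 3 := by
  have hprod := H.card_mul_card_eq_card_inf_mul_card X
    (codisjoint_iff.mp (hH.not_le_iff_codisjoint.mp hXH))
  have : Finite (MulAut X) := Finite.of_injective _ MulEquiv.toEquiv_injective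
  have hGX : Nat.card G ≤ outCard X * Nat.card X :=
    (Nat.card_le_card_of_injective _ (MulAut.conjNormal_injective X hX)).trans
      (card_mulAut_le_outCard_mul_card X)
  set g := Nat.card G
  set x := Nat.card X
  set m := Nat.card (H ⊓ X : Subgroup G)
  have hx : 0 < x := Nat.card_pos
  have hcube : x ^ 3 < m ^ 3 * g ^ 2 := by
    refine Nat.lt_of_mul_lt_mul_left (a := g) ?_
    calc g * x ^ 3 < Nat.card H ^ 3 * x ^ 3 := Nat.mul_lt_mul_of_pos_right hG (by positivity)
      _ = (m * g) ^ 3 := by rw [← mul_pow, hprod]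
      _ = g * (m ^ 3 * g ^ 2) := by ring
  refine Nat.lt_of_mul_lt_mul_left (a := x ^ 2) ?_
  calc x ^ 2 * x = x ^ 3 := by ring
    _ < m ^ 3 * g ^ 2 := hcube
    _ ≤ m ^ 3 * (outCard X * x) ^ 2 := Nat.mul_le_mul_left _ (Nat.pow_le_pow_left hGX 2)
    _ = x ^ 2 * (outCard X ^ 2 * m ^ 3) := by ring

/-- Corollary 2.7 of the paper: for a nontrivial flag-transitive symmetric `(v,k,λ)`
design with automorphism group `G` and point stabiliser `G_α` one has
`λ·|G| < |G_α|³`, in particular `|G| ≤ |G_α|³`; moreover, if `G` is almost simple with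
socle `X` and `H = G_α` is maximal in `G` not containing `X`, then
`|X| < |Out(X)|²·|H ∩ X|³`. -/
theorem symmetricDesign_flagTransitive_large_stabilizer
    {P : Type} [Fintype P] [DecidableEq P] {v k lam : ℕ}
    (D : SymmetricDesign P v k lam) (hnt : 2 < k ∧ k < v - 1)
    (G : Subgroup (Equiv.Perm P)) (hAut : IsAutGroup D G)
    (hFlag : FlagTransitive D G) (α : P) :
    (lam * Nat.card G < Nat.card (MulAction.stabilizer G α) ^ 3 ∧
      Nat.card G ≤ Nat.card (MulAction.stabilizer G α) ^ 3) ∧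
    (∀ X : Subgroup G, X.Normal → IsSimpleGroup X →
      (∃ a b : X, a * b ≠ b * a) →
      Subgroup.centralizer (X : Set G) = ⊥ →
      IsCoatom (MulAction.stabilizer G α) → ¬ X ≤ MulAction.stabilizer G α →
      Nat.card X <
        outCard X ^ 2 * Nat.card (MulAction.stabilizer G α ⊓ X : Subgroup G) ^ 3) := by
  obtain ⟨hk, hkv⟩ := hnt
  have hlt := hFlag.lam_mul_card_lt_card_stabilizer_pow_three hAut (by omega) (by omega) α
  have hG : Nat.card G < Nat.card (MulAction.stabilizer G α) ^ 3 :=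
    (Nat.le_mul_of_pos_left _ (D.lam_pos α hk.le)).trans_lt hlt
  refine ⟨⟨hlt, hG.le⟩, ?_⟩
  intro X _ _ _ hX hH hXH
  exact card_lt_outCard_sq_mul_card_inf_pow_three _ X hG hX hH hXH
end

section
/- Let t be a positive integer. (a) If t ≥ 5, then t! < 5^((t²−3t+1)/3), i.e., (t!)³ < 5^(t²−3t+1). (b) If t ≥ 4, then t! < 2^(4t(t−3)/3), i.e., (t!)³ < 2^(4t(t−3)). -/
/-!
Induction on `t`. Going from `t` to `t + 1` multiplies `(t!)³` by `(t + 1)³`, while both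
exponents grow by a multiple of `t - 1`: the right-hand sides are multiplied by `25 ^ (t - 1)`
and `256 ^ (t - 1)` respectively, and `(t + 1)³ ≤ 25 ^ (t - 1)` as soon as `t ≥ 3`.
-/

open scoped Nat

theorem factorial_pow_lt_of_succ_pow_mul_le {k t₀ : ℕ} {a : ℕ → ℕ} (h₀ : t₀ ! ^ k < a t₀)
    (hstep : ∀ n ≥ t₀, (n + 1) ^ k * a n ≤ a (n + 1)) {t : ℕ} (ht : t₀ ≤ t) :
    t ! ^ k < a t := by
  induction t, ht using Nat.le_induction with
  | base => exact h₀
  | succ n hn ih =>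
    calc (n + 1)! ^ k = (n + 1) ^ k * n ! ^ k := by rw [Nat.factorial_succ, mul_pow]
      _ < (n + 1) ^ k * a n := by gcongr
      _ ≤ a (n + 1) := hstep n hn

theorem succ_pow_three_le_pow_pred {c n : ℕ} (hc : 25 ≤ c) (hn : 3 ≤ n) :
    (n + 1) ^ 3 ≤ c ^ (n - 1) := by
  induction n, hn using Nat.le_induction with
  | base => calc 4 ^ 3 ≤ 25 ^ 2 := by norm_num
      _ ≤ c ^ 2 := by gcongr
  | succ n hn ih =>
    calc (n + 1 + 1) ^ 3 ≤ (2 * (n + 1)) ^ 3 := Nat.pow_le_pow_left (by omega) 3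
      _ ≤ 25 * (n + 1) ^ 3 := by rw [mul_pow]; gcongr; norm_num
      _ ≤ c * c ^ (n - 1) := Nat.mul_le_mul hc ih
      _ = c ^ (n + 1 - 1) := by rw [← pow_succ', show n + 1 - 1 = n - 1 + 1 by omega]

theorem succ_pow_three_mul_pow_le_pow {b d e e' n : ℕ} (hb : 25 ≤ b ^ d) (hn : 3 ≤ n)
    (he : e' = e + d * (n - 1)) : (n + 1) ^ 3 * b ^ e ≤ b ^ e' := by
  calc (n + 1) ^ 3 * b ^ e ≤ (b ^ d) ^ (n - 1) * b ^ e :=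
        Nat.mul_le_mul_right _ (succ_pow_three_le_pow_pred hb hn)
    _ = b ^ e' := by rw [he, ← pow_mul, ← pow_add, add_comm]

theorem factorial_lt_pow_bounds_general (t : ℕ) :
    (5 ≤ t → (Nat.factorial t) ^ 3 < 5 ^ (t ^ 2 - 3 * t + 1)) ∧
    (4 ≤ t → (Nat.factorial t) ^ 3 < 2 ^ (4 * t * (t - 3))) := by
  refine ⟨fun ht => factorial_pow_lt_of_succ_pow_mul_le
      (a := fun t => 5 ^ (t ^ 2 - 3 * t + 1)) ?_ (fun n hn => ?_) ht,
    fun ht => factorial_pow_lt_of_succ_pow_mul_le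
      (a := fun t => 2 ^ (4 * t * (t - 3))) ?_ (fun n hn => ?_) ht⟩
  · norm_num [Nat.factorial]
  · refine succ_pow_three_mul_pow_le_pow (d := 2) (by norm_num) (by omega) ?_
    have hn_sq : 3 * n ≤ n ^ 2 := by nlinarith
    have hsucc_sq : (n + 1) ^ 2 = n ^ 2 + 2 * n + 1 := by ring
    omega
  · norm_num [Nat.factorial]
  · refine succ_pow_three_mul_pow_le_pow (d := 8) (by norm_num) (by omega) ?_
    obtain ⟨m, rfl⟩ := Nat.exists_eq_add_of_le' hn
    simp only [show m + 4 + 1 - 3 = m + 2 by omega, show m + 4 - 3 = m + 1 by omega,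
      show m + 4 - 1 = m + 3 by omega]
    ring

/-- Lemma 4.4 of [AB-Large-15]: (a) if `t ≥ 5` then `t! < 5^((t²-3t+1)/3)`, i.e.
`(t!)³ < 5^(t²-3t+1)`; (b) if `t ≥ 4` then `t! < 2^(4t(t-3)/3)`, i.e.
`(t!)³ < 2^(4t(t-3))`. -/
theorem factorial_lt_pow_bounds (t : ℕ) (ht : 0 < t) :
    (5 ≤ t → (Nat.factorial t) ^ 3 < 5 ^ (t ^ 2 - 3 * t + 1)) ∧
    (4 ≤ t → (Nat.factorial t) ^ 3 < 2 ^ (4 * t * (t - 3))) :=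
  factorial_lt_pow_bounds_general t
end

section
/- Suppose 𝒟 is a symmetric (v,k,λ) design with λ prime admitting a flag-transitive, point-imprimitive group of automorphisms G, and suppose G leaves invariant a nontrivial partition 𝒞 of the point set 𝒫 with d classes each of size c (so v = cd, 1 < c < v). Then there is a constant l such that for every block B and every class Δ ∈ 𝒞 one has |B ∩ Δ| ∈ {0, l}, and one of the following holds: (a) k ≤ λ(λ−3)/2; (b) (v,k,λ) = (λ²(λ+2), λ(λ+1), λ) with (c,d,l) = (λ², λ+2, λ) or (c,d,l) = (λ+2, λ², 2); (c) (v,k,λ,c,d,l) = ((λ+6)(λ²+4λ−1)/4, λ(λ+5)/2, λ, λ+6, (λ²+4λ−1)/4, 3), where λ ≡ 1 or 3 (mod 6). -/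
section Aux

variable {P : Type} [Fintype P] [DecidableEq P]

/-- Double counting incidences between a family of blocks and a set of points. -/
lemma double_count_aux (F : Finset (Finset P)) (E : Finset P) :
    ∑ b ∈ F, (b ∩ E).card = ∑ a ∈ E, (F.filter (fun b => a ∈ b)).card := by
  calc ∑ b ∈ F, (b ∩ E).card
      = ∑ b ∈ F, ∑ a ∈ E, if a ∈ b then 1 else 0 := by
        refine Finset.sum_congr rfl fun b _ => ?_
        rw [Finset.inter_comm, ← Finset.filter_mem_eq_inter, Finset.card_filter]
    _ = ∑ a ∈ E, ∑ b ∈ F, if a ∈ b then 1 else 0 := Finset.sum_comm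
    _ = _ := Finset.sum_congr rfl fun a _ => (Finset.card_filter _ _).symm

/-- The purely arithmetic classification for `λ` prime. -/
lemma arith_classification {lam c d k l : ℕ} (hp : lam.Prime) (hc : 1 < c) (hd : 2 ≤ d)
    (h1 : lam * (c - 1) = k * (l - 1))
    (h2 : lam * (c * d - 1) = k * (k - 1))
    (h3 : l ∣ lam * c) (h4 : l ∣ k)
    (hl2 : 2 ≤ l) (hlk : l < k) :
    c * d = lam ^ 2 * (lam + 2) ∧ k = lam * (lam + 1) ∧ c = lam ^ 2 ∧ d = lam + 2 ∧
      l = lam := by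
  have hlam2 := hp.two_le
  have hcd4 : 4 ≤ c * d := by
    have h := Nat.mul_le_mul (show 2 ≤ c by omega) hd
    omega
  by_cases hk : lam ∣ k
  · -- Case λ ∣ k
    obtain ⟨t, rfl⟩ := hk
    have ht1 : 1 ≤ t := by
      rcases Nat.eq_zero_or_pos t with h | h
      · subst h; rw [Nat.mul_zero] at hlk; omega
      · exact h
    have hc1 : c - 1 = t * (l - 1) := by
      apply Nat.eq_of_mul_eq_mul_left (show 0 < lam by omega)
      rw [h1]; ring
    have hll : l ∣ lam := by
      have h5 : lam * c = lam * t * (l - 1) + lam := by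
        have hc' : c = (c - 1) + 1 := by omega
        rw [hc', Nat.mul_add, hc1, Nat.mul_one]; ring
      have h6 : l ∣ lam * t * (l - 1) := dvd_mul_of_dvd_left h4 _
      have h7 : l ∣ lam * t * (l - 1) + lam := h5 ▸ h3
      exact (Nat.dvd_add_right h6).mp h7
    have hle : lam = l := by
      rcases hp.eq_one_or_self_of_dvd l hll with h | h
      · omega
      · exact h.symm
    subst hle
    have hcd : c * d - 1 = t * (lam * t - 1) := by
      apply Nat.eq_of_mul_eq_mul_left (show 0 < lam by omega)
      rw [h2]; ring
    have hlt1 : 1 ≤ lam * t := le_trans (by omega) (Nat.mul_le_mul (le_refl lam) ht1)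
    have hcd' : (c : ℤ) * d = lam * t ^ 2 - t + 1 := by
      zify [hlt1, show 1 ≤ c * d by omega] at hcd
      linarith [hcd]
    have hcZ : (c : ℤ) = t * ((lam : ℤ) - 1) + 1 := by
      zify [show 1 ≤ c by omega, show 1 ≤ lam by omega] at hc1
      linarith [hc1]
    have hdvdZ : (c : ℤ) ∣ (lam : ℤ) ^ 2 := by
      have key : ((lam : ℤ)) ^ 2 =
          ((lam : ℤ) - 1) ^ 2 * ((c : ℤ) * d) - c * (lam * c - 3 * lam + 1) := by
        rw [hcd', hcZ]; ring
      rw [key]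
      exact dvd_sub (Dvd.dvd.mul_left (dvd_mul_right (c : ℤ) d) _) (dvd_mul_right _ _)
    have hdvdN : c ∣ lam ^ 2 := by exact_mod_cast hdvdZ
    obtain ⟨i, hi2, hci⟩ := (Nat.dvd_prime_pow hp).mp hdvdN
    interval_cases i
    · simp at hci; omega
    · -- c = lam : leads to t = 1 and k = lam, contradiction
      exfalso
      rw [pow_one] at hci
      have h := hc1
      rw [hci] at h
      have h' : t * (lam - 1) = 1 * (lam - 1) := by rw [one_mul, ← h]
      have ht : t = 1 := Nat.eq_of_mul_eq_mul_right (by omega) h'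
      rw [ht, Nat.mul_one] at hlk
      omega
    · -- c = lam ^ 2
      subst hci
      have htval : t = lam + 1 := by
        have h8 : (t : ℤ) * ((lam : ℤ) - 1) = ((lam : ℤ) + 1) * ((lam : ℤ) - 1) := by
          have : ((lam : ℤ) ^ 2 : ℤ) = t * ((lam : ℤ) - 1) + 1 := by
            exact_mod_cast hcZ
          linarith [this]
        have hlamZ : (2 : ℤ) ≤ (lam : ℤ) := by exact_mod_cast hlam2
        have h9 : (t : ℤ) = (lam : ℤ) + 1 :=
          mul_right_cancel₀ (by linarith) h8
        exact_mod_cast h9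
      subst htval
      have hcdval : (lam : ℤ) ^ 2 * d = ((lam : ℤ) ^ 2) * ((lam : ℤ) + 2) := by
        have := hcd'
        push_cast at this ⊢
        linarith [this]
      have hdval : (d : ℤ) = (lam : ℤ) + 2 :=
        mul_left_cancel₀ (by positivity) hcdval
      have hd' : d = lam + 2 := by exact_mod_cast hdval
      subst hd'
      refine ⟨by ring, by ring, rfl, rfl, rfl⟩
  · -- Case λ ∤ k : impossible
    exfalso
    have hdl : lam ∣ l - 1 := by
      have hh : lam ∣ k * (l - 1) := h1 ▸ dvd_mul_right lam (c - 1)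
      rcases (Nat.Prime.dvd_mul hp).mp hh with h | h
      · exact absurd h hk
      · exact h
    obtain ⟨s, hs⟩ := hdl
    have hs1 : 1 ≤ s := by
      rcases Nat.eq_zero_or_pos s with h | h
      · subst h; omega
      · exact h
    have hcs : c - 1 = k * s := by
      apply Nat.eq_of_mul_eq_mul_left (show 0 < lam by omega)
      rw [h1, hs]; ring
    have hku : lam ∣ k - 1 := by
      have hh : lam ∣ k * (k - 1) := h2 ▸ dvd_mul_right lam (c * d - 1)
      rcases (Nat.Prime.dvd_mul hp).mp hh with h | h
      · exact absurd h hk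
      · exact h
    obtain ⟨u, hu⟩ := hku
    have hk3 : 3 ≤ k := by omega
    have hu1 : 1 ≤ u := by
      rcases Nat.eq_zero_or_pos u with h | h
      · subst h; omega
      · exact h
    have hcdu : c * d - 1 = k * u := by
      apply Nat.eq_of_mul_eq_mul_left (show 0 < lam by omega)
      rw [h2, hu]; ring
    have hks : k * 1 ≤ k * s := Nat.mul_le_mul_left k hs1
    have hcge : k + 1 ≤ c := by omega
    have hss : 1 * s ≤ k * s := Nat.mul_le_mul_right s (by omega)
    have hsc : s < c := by omega
    have huu : 1 * u ≤ lam * u := Nat.mul_le_mul_right u (by omega)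
    have huc : u < c := by omega
    have e1 : c * d = k * u + 1 := by omega
    have e2 : c = k * s + 1 := by omega
    have hiden : s * (c * d) + u = u * c + s := by
      rw [e1, e2]; ring
    have hdvdsu : (c : ℤ) ∣ ((s : ℤ) - (u : ℤ)) := by
      have h7 : (c : ℤ) ∣ (s : ℤ) * ((c : ℤ) * d) :=
        Dvd.dvd.mul_left (dvd_mul_right (c : ℤ) d) _
      have h8 : (c : ℤ) ∣ (u : ℤ) * c := dvd_mul_left _ _
      have h9 : (s : ℤ) - (u : ℤ) = (s : ℤ) * ((c : ℤ) * d) - (u : ℤ) * c := by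
        have := hiden
        zify at this
        linarith [this]
      rw [h9]
      exact dvd_sub h7 h8
    have habs : |(s : ℤ) - (u : ℤ)| < (c : ℤ) := by
      rw [abs_lt]
      constructor <;> omega
    have hzero : (s : ℤ) - (u : ℤ) = 0 := Int.eq_zero_of_abs_lt_dvd hdvdsu habs
    have hsu : s = u := by omega
    subst hsu
    have : c * d = c * 1 := by omega
    have : d = 1 := Nat.eq_of_mul_eq_mul_left (by omega) this
    omega

end Aux

/-- Corollary 1.2 of the paper: for a symmetric `(v,k,λ)` design with `λ` prime
admitting a flag-transitive point-imprimitive automorphism group `G` leaving invariant a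
nontrivial partition `C` of the point set with `d` classes of size `c`, there is a
constant `l` with `|B ∩ Δ| ∈ {0, l}` for every block `B` and class `Δ`, and one of:
(a) `k ≤ λ(λ-3)/2`;
(b) `(v,k,λ) = (λ²(λ+2), λ(λ+1), λ)` with `(c,d,l) = (λ², λ+2, λ)` or `(λ+2, λ², 2)`;
(c) `(v,k,λ,c,d,l) = ((λ+6)(λ²+4λ-1)/4, λ(λ+5)/2, λ, λ+6, (λ²+4λ-1)/4, 3)` with
`λ ≡ 1, 3 (mod 6)`. -/
theorem flagTransitive_imprimitive_lambda_prime
    {P : Type} [Fintype P] [DecidableEq P] {v k lam : ℕ}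
    (D : SymmetricDesign P v k lam) (hlamprime : lam.Prime)
    (G : Subgroup (Equiv.Perm P)) (hAut : IsAutGroup D G)
    (hFlag : FlagTransitive D G)
    (hTrans : ∀ p q : P, ∃ g ∈ G, g p = q)
    (C : Finset (Finset P)) (c d : ℕ)
    (hv : v = c * d) (hd : C.card = d) (hc : ∀ Δ ∈ C, Δ.card = c)
    (hpart : ∀ p : P, ∃! Δ : Finset P, Δ ∈ C ∧ p ∈ Δ)
    (hnontrivial : 1 < c ∧ c < v)
    (hinv : ∀ g ∈ G, ∀ Δ ∈ C, Δ.image (g : P → P) ∈ C) :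
    ∃ l : ℕ,
      (∀ b ∈ D.blocks, ∀ Δ ∈ C, (b ∩ Δ).card = 0 ∨ (b ∩ Δ).card = l) ∧
      (k ≤ lam * (lam - 3) / 2 ∨
       (v = lam ^ 2 * (lam + 2) ∧ k = lam * (lam + 1) ∧
         ((c = lam ^ 2 ∧ d = lam + 2 ∧ l = lam) ∨
          (c = lam + 2 ∧ d = lam ^ 2 ∧ l = 2))) ∨
       (4 * v = (lam + 6) * (lam ^ 2 + 4 * lam - 1) ∧ 2 * k = lam * (lam + 5) ∧
         c = lam + 6 ∧ 4 * d = lam ^ 2 + 4 * lam - 1 ∧ l = 3 ∧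
         (lam % 6 = 1 ∨ lam % 6 = 3))) := by
  obtain ⟨hc1, hcv⟩ := hnontrivial
  have hlam2 : 2 ≤ lam := hlamprime.two_le
  have hd2 : 2 ≤ d := by
    rcases Nat.lt_or_ge d 2 with h | h
    · interval_cases d <;> omega
    · exact h
  have hv4 : 4 ≤ v := by
    have h := Nat.mul_le_mul (show 2 ≤ c by omega) hd2
    omega
  -- k ≥ 1
  have hk1 : 1 ≤ k := by
    by_contra h
    have hk0 : k = 0 := by omega
    obtain ⟨b₁, hb₁, b₂, hb₂, hne⟩ :=
      Finset.one_lt_card.mp (show 1 < D.blocks.card by rw [D.card_blocks]; omega)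
    have e₁ : b₁ = ∅ := Finset.card_eq_zero.mp (by rw [D.block_size b₁ hb₁, hk0])
    have e₂ : b₂ = ∅ := Finset.card_eq_zero.mp (by rw [D.block_size b₂ hb₂, hk0])
    exact hne (e₁.trans e₂.symm)
  -- pick a flag (α₀, b₀)
  obtain ⟨b₀, hb₀⟩ := Finset.card_pos.mp
    (show 0 < D.blocks.card by rw [D.card_blocks]; omega)
  obtain ⟨α₀, hα₀⟩ := Finset.card_pos.mp
    (show 0 < b₀.card by rw [D.block_size b₀ hb₀]; omega)
  obtain ⟨Δ₀, hΔ₀pair, huniq₀⟩ := hpart α₀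
  obtain ⟨hΔ₀C, hα₀Δ₀⟩ := hΔ₀pair
  set l : ℕ := (b₀ ∩ Δ₀).card with hldef
  -- constancy of nonzero intersection sizes
  have hl : ∀ b ∈ D.blocks, ∀ Δ ∈ C, (b ∩ Δ).card = 0 ∨ (b ∩ Δ).card = l := by
    intro b hb Δ hΔ
    rcases Nat.eq_zero_or_pos (b ∩ Δ).card with h0 | hpos
    · exact Or.inl h0
    right
    obtain ⟨β, hβ⟩ := Finset.card_pos.mp hpos
    have hβb : β ∈ b := (Finset.mem_inter.mp hβ).1
    have hβΔ : β ∈ Δ := (Finset.mem_inter.mp hβ).2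
    obtain ⟨g, hgG, hgβ, hgb⟩ := hFlag β α₀ b b₀ hb hb₀ hβb hα₀
    have hgΔ : Δ.image (g : P → P) ∈ C := hinv g hgG Δ hΔ
    have hmem : α₀ ∈ Δ.image (g : P → P) := Finset.mem_image.mpr ⟨β, hβΔ, hgβ⟩
    have hΔeq : Δ.image (g : P → P) = Δ₀ := huniq₀ _ ⟨hgΔ, hmem⟩
    calc (b ∩ Δ).card = ((b ∩ Δ).image (g : P → P)).card :=
          (Finset.card_image_of_injective _ (Equiv.injective g)).symm
      _ = (b.image (g : P → P) ∩ Δ.image (g : P → P)).card := by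
          rw [Finset.image_inter _ _ (Equiv.injective g)]
      _ = (b₀ ∩ Δ₀).card := by rw [hgb, hΔeq]
  -- membership of α₀ forces intersection = l
  have hl' : ∀ b ∈ D.blocks, α₀ ∈ b → (b ∩ Δ₀).card = l := by
    intro b hb hα
    rcases hl b hb Δ₀ hΔ₀C with h | h
    · exact absurd h (Finset.card_ne_zero_of_mem (Finset.mem_inter.mpr ⟨hα, hα₀Δ₀⟩))
    · exact h
  have hlk : l ≤ k := by
    rw [hldef, ← D.block_size b₀ hb₀]
    exact Finset.card_le_card Finset.inter_subset_left
  have hΔ₀card : Δ₀.card = c := hc Δ₀ hΔ₀C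
  -- the set of blocks through α₀
  set F : Finset (Finset P) := D.blocks.filter (fun b => α₀ ∈ b) with hFdef
  have hFcard : F.card = k := D.point_count α₀
  have hFmem : ∀ b ∈ F, b ∈ D.blocks ∧ α₀ ∈ b := fun b hb => Finset.mem_filter.mp hb
  -- column counts: for a ≠ α₀, the number of blocks through α₀ and a is λ
  have hcol : ∀ a : P, a ≠ α₀ → (F.filter (fun b => a ∈ b)).card = lam := by
    intro a ha
    rw [hFdef, Finset.filter_filter]
    exact D.pair_count α₀ a (Ne.symm ha)
  -- Identity I1 : k * (l - 1) = (c - 1) * lam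
  have hI1 : k * (l - 1) = (c - 1) * lam := by
    have hrows : ∑ b ∈ F, (b ∩ (Δ₀.erase α₀)).card = k * (l - 1) := by
      have : ∀ b ∈ F, (b ∩ (Δ₀.erase α₀)).card = l - 1 := by
        intro b hb
        obtain ⟨hbB, hbα⟩ := hFmem b hb
        have hinter : b ∩ (Δ₀.erase α₀) = (b ∩ Δ₀).erase α₀ := by
          ext p
          simp only [Finset.mem_inter, Finset.mem_erase]
          tauto
        rw [hinter, Finset.card_erase_of_mem (Finset.mem_inter.mpr ⟨hbα, hα₀Δ₀⟩),
          hl' b hbB hbα]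
      rw [Finset.sum_congr rfl this, Finset.sum_const, hFcard, smul_eq_mul]
    have hcols : ∑ b ∈ F, (b ∩ (Δ₀.erase α₀)).card = (c - 1) * lam := by
      rw [double_count_aux]
      have : ∀ a ∈ Δ₀.erase α₀, (F.filter (fun b => a ∈ b)).card = lam := by
        intro a ha
        exact hcol a (Finset.mem_erase.mp ha).1
      rw [Finset.sum_congr rfl this, Finset.sum_const,
        Finset.card_erase_of_mem hα₀Δ₀, hΔ₀card, smul_eq_mul]
    omega
  -- Identity I2 : k * (k - 1) = (v - 1) * lam
  have hI2 : k * (k - 1) = (v - 1) * lam := by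
    have hrows : ∑ b ∈ F, (b ∩ (Finset.univ.erase α₀)).card = k * (k - 1) := by
      have : ∀ b ∈ F, (b ∩ (Finset.univ.erase α₀)).card = k - 1 := by
        intro b hb
        obtain ⟨hbB, hbα⟩ := hFmem b hb
        have hinter : b ∩ (Finset.univ.erase α₀) = b.erase α₀ := by
          ext p
          simp only [Finset.mem_inter, Finset.mem_erase, Finset.mem_univ, and_true]
          tauto
        rw [hinter, Finset.card_erase_of_mem hbα, D.block_size b hbB]
      rw [Finset.sum_congr rfl this, Finset.sum_const, hFcard, smul_eq_mul]
    have hcols : ∑ b ∈ F, (b ∩ (Finset.univ.erase α₀)).card = (v - 1) * lam := by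
      rw [double_count_aux]
      have : ∀ a ∈ Finset.univ.erase α₀, (F.filter (fun b => a ∈ b)).card = lam := by
        intro a ha
        exact hcol a (Finset.mem_erase.mp ha).1
      rw [Finset.sum_congr rfl this, Finset.sum_const,
        Finset.card_erase_of_mem (Finset.mem_univ α₀), Finset.card_univ,
        D.card_points, smul_eq_mul]
    omega
  -- a second class Δ' ≠ Δ₀
  obtain ⟨Δ', hΔ'C, hΔ'ne⟩ :=
    Finset.exists_mem_ne (show 1 < C.card by rw [hd]; omega) Δ₀
  have hα₀Δ' : α₀ ∉ Δ' := by
    intro h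
    exact hΔ'ne (huniq₀ Δ' ⟨hΔ'C, h⟩)
  have hΔ'card : Δ'.card = c := hc Δ' hΔ'C
  -- Identity I3 : l ∣ lam * c
  have hI3 : l ∣ lam * c := by
    have hcols : ∑ b ∈ F, (b ∩ Δ').card = lam * c := by
      rw [double_count_aux]
      have : ∀ a ∈ Δ', (F.filter (fun b => a ∈ b)).card = lam := by
        intro a ha
        refine hcol a ?_
        intro h
        exact hα₀Δ' (h ▸ ha)
      rw [Finset.sum_congr rfl this, Finset.sum_const, hΔ'card, smul_eq_mul,
        Nat.mul_comm]
    rw [← hcols]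
    refine Finset.dvd_sum fun b hb => ?_
    rcases hl b (hFmem b hb).1 Δ' hΔ'C with h | h
    · simp [h]
    · simp [h]
  -- Identity I4 : l ∣ k
  have hclassone : ∀ a : P, (C.filter (fun Δ => a ∈ Δ)).card = 1 := by
    intro a
    obtain ⟨Δa, ⟨hΔa, haΔ⟩, hu⟩ := hpart a
    refine Finset.card_eq_one.mpr ⟨Δa, ?_⟩
    ext X
    simp only [Finset.mem_filter, Finset.mem_singleton]
    constructor
    · rintro ⟨h1, h2⟩; exact hu X ⟨h1, h2⟩
    · rintro rfl; exact ⟨hΔa, haΔ⟩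
  have hI4 : l ∣ k := by
    have hsum : ∑ Δ ∈ C, (Δ ∩ b₀).card = k := by
      rw [double_count_aux]
      have : ∀ a ∈ b₀, (C.filter (fun Δ => a ∈ Δ)).card = 1 := fun a _ => hclassone a
      rw [Finset.sum_congr rfl this, Finset.sum_const, D.block_size b₀ hb₀,
        smul_eq_mul, Nat.mul_one]
    rw [← hsum]
    refine Finset.dvd_sum fun Δ hΔ => ?_
    rcases hl b₀ hb₀ Δ hΔ with h | h
    · rw [Finset.inter_comm] at h; simp [h]
    · rw [Finset.inter_comm] at h; simp [h]
  -- l ≥ 2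
  have hlamne : lam ≠ 0 := by omega
  have hblocks_pair : ∀ p q : P, p ≠ q → ∃ b ∈ D.blocks, p ∈ b ∧ q ∈ b := by
    intro p q hpq
    have hpos : 0 < (D.blocks.filter fun b => p ∈ b ∧ q ∈ b).card := by
      rw [D.pair_count p q hpq]; omega
    obtain ⟨b, hb⟩ := Finset.card_pos.mp hpos
    obtain ⟨hb1, hb2⟩ := Finset.mem_filter.mp hb
    exact ⟨b, hb1, hb2⟩
  have hl2 : 2 ≤ l := by
    obtain ⟨β, hβΔ₀, hβne⟩ :=
      Finset.exists_mem_ne (show 1 < Δ₀.card by rw [hΔ₀card]; omega) α₀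
    obtain ⟨b, hbB, hbα, hbβ⟩ := hblocks_pair α₀ β (Ne.symm hβne)
    have hsub : ({α₀, β} : Finset P) ⊆ b ∩ Δ₀ := by
      intro x hx
      rcases Finset.mem_insert.mp hx with h | h
      · subst h; exact Finset.mem_inter.mpr ⟨hbα, hα₀Δ₀⟩
      · rw [Finset.mem_singleton] at h; subst h
        exact Finset.mem_inter.mpr ⟨hbβ, hβΔ₀⟩
    have h2 : 2 ≤ (b ∩ Δ₀).card := by
      have := Finset.card_le_card hsub
      rwa [Finset.card_pair (Ne.symm hβne)] at this
    rw [← hl' b hbB hbα]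
    exact h2
  -- l < k
  have hlltk : l < k := by
    rcases Nat.lt_or_ge l k with h | h
    · exact h
    have hlk' : l = k := by omega
    exfalso
    obtain ⟨β', hβ'Δ'⟩ := Finset.card_pos.mp (show 0 < Δ'.card by rw [hΔ'card]; omega)
    have hβ'ne : α₀ ≠ β' := by
      intro hh
      exact hα₀Δ' (hh ▸ hβ'Δ')
    obtain ⟨b, hbB, hbα, hbβ'⟩ := hblocks_pair α₀ β' hβ'ne
    have hbcard : (b ∩ Δ₀).card = l := hl' b hbB hbα
    have hbeq : b ∩ Δ₀ = b :=
      Finset.eq_of_subset_of_card_le Finset.inter_subset_left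
        (by rw [hbcard, D.block_size b hbB]; omega)
    have hβ'Δ₀ : β' ∈ Δ₀ := by
      have : β' ∈ b ∩ Δ₀ := hbeq.symm ▸ hbβ'
      exact (Finset.mem_inter.mp this).2
    obtain ⟨Δβ', hΔβ'pair, huniqβ'⟩ := hpart β'
    have e1 : Δ' = Δβ' := huniqβ' Δ' ⟨hΔ'C, hβ'Δ'⟩
    have e2 : Δ₀ = Δβ' := huniqβ' Δ₀ ⟨hΔ₀C, hβ'Δ₀⟩
    exact hΔ'ne (e1.trans e2.symm)
  -- apply arithmetic classification
  have harith := arith_classification hlamprime hc1 hd2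
    (show lam * (c - 1) = k * (l - 1) by rw [Nat.mul_comm]; exact hI1.symm)
    (show lam * (c * d - 1) = k * (k - 1) by
      rw [← hv, Nat.mul_comm]; exact hI2.symm)
    hI3 hI4 hl2 hlltk
  obtain ⟨hcd, hkval, hcval, hdval, hlval⟩ := harith
  exact ⟨l, hl, Or.inr (Or.inl ⟨by rw [hv, hcd], hkval,
    Or.inl ⟨hcval, hdval, hlval⟩⟩)⟩
end
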